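/- arXiv:1903.01164 — 3 statements merged into one kernel-verified Lean document; each statement's English description precedes it below -/
import Mathlib

section
/- Let V and W be finite-dimensional real vector spaces. Let (q_α)_{α∈A} be a nonempty finite family of linear maps V* → V each of which is symmetric (⟨f, q_α g⟩ = ⟨g, q_α f⟩ for all f, g ∈ V*) and positive definite (⟨f, q_α f⟩ > 0 for all f ≠ 0). Let b : W → Hom(V, V*) be a linear map such that each b_ω is skew (⟨b_ω x, y⟩ = −⟨b_ω y, x⟩ for all x, y ∈ V), assume there is ω₀ ∈ W with b_{ω₀} bijective, and assume the commutation relations q_α ∘ b_ω ∘ q_β = q_β ∘ b_ω ∘ q_α for all α, β ∈ A and all ω ∈ W. Then there is a finite family (P_γ)_{γ∈Γ} of nonzero linear projections of V (P_γ² = P_γ) such that: (i) Σ_{γ∈Γ} P_γ = id_V and P_{γ₁}P_{γ₂} = 0 for γ₁ ≠ γ₂; (ii) each P_γ is b_ω-self-adjoint for every ω ∈ W (⟨b_ω P_γ x, y⟩ = ⟨b_ω x, P_γ y⟩ for all x, y ∈ V) and q_α^{-1}-self-adjoint for every α ∈ A (⟨q_α^{-1} P_γ x, y⟩ = ⟨q_α^{-1}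 x, P_γ y⟩ for all x, y ∈ V, q_α being invertible by positive definiteness); (iii) for every γ ∈ Γ, the linear maps P_γ ∘ q_α ∘ P_γ* : V* → V, α ∈ A, are pairwise proportional (each is a real scalar multiple of any other), where P_γ* : V* → V* is the transpose of P_γ. -/
/-!
Fix `α₀` and use the positive definite form `g = q α₀⁻¹` as an inner product on `V`. The maps
`T α = q α ∘ g` are `g`-symmetric, and since `b ω₀ ∘ q α₀` is onto, the relations
`q α ∘ b ω ∘ q β = q β ∘ b ω ∘ q α` force `q α ∘ g ∘ q β = q β ∘ g ∘ q α`, so the `T α` commute.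
Let `P γ` be the orthogonal projections onto their joint eigenspaces. A bilinear form for which
every `T α` is self-adjoint makes distinct joint eigenspaces orthogonal, hence every `P γ`
self-adjoint; `b ω` and `q α⁻¹` are such forms. Finally `T α` acts on the range of `P γ` as a
nonzero scalar `χ γ α`, which gives `P γ ∘ q α ∘ (P γ)* = χ γ α • (P γ ∘ q α₀)`.
-/

open scoped Function

namespace LinearMap

theorem isSelfAdjoint_of_sum_eq_id {R M N ι : Type*} [CommSemiring R] [AddCommMonoid M]
    [Module R M] [AddCommMonoid N] [Module R N] [Fintype ι] (B : M →ₗ[R] M →ₗ[R] N)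
    {P : ι → Module.End R M} (hsum : ∑ i, P i = id)
    (horth : ∀ i j, i ≠ j → ∀ x y, B (P i x) (P j y) = 0) (i : ι) : B.IsSelfAdjoint (P i) := by
  have hdecomp (z : M) : ∑ j, P j z = z := by simpa using LinearMap.congr_fun hsum z
  intro x y
  calc B (P i x) y = ∑ j, B (P i x) (P j y) := by rw [← map_sum, hdecomp]
    _ = B (P i x) (P i y) :=
      Finset.sum_eq_single i (fun j _ hj => horth i j hj.symm x y) (by simp)
    _ = ∑ j, B (P j x) (P i y) :=
      (Finset.sum_eq_single i (fun j _ hj => horth j i hj x y) (by simp)).symm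
    _ = B x (P i y) := by rw [← sum_apply, ← map_sum, hdecomp]

theorem apply_eq_zero_of_mem_iInf_eigenspace {K M N A : Type*} [Field K] [AddCommGroup M]
    [Module K M] [AddCommGroup N] [Module K N] (B : M →ₗ[K] M →ₗ[K] N)
    {T : A → Module.End K M} (hT : ∀ α, B.IsSelfAdjoint (T α)) {χ ψ : A → K} (hχψ : χ ≠ ψ)
    {x y : M} (hx : x ∈ ⨅ α, (T α).eigenspace (χ α)) (hy : y ∈ ⨅ α, (T α).eigenspace (ψ α)) :
    B x y = 0 := by
  obtain ⟨α, hα⟩ := Function.ne_iff.mp hχψ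
  have hxα := Module.End.mem_eigenspace_iff.mp (Submodule.mem_iInf _ |>.mp hx α)
  have hyα := Module.End.mem_eigenspace_iff.mp (Submodule.mem_iInf _ |>.mp hy α)
  have h : χ α • B x y = ψ α • B x y := by
    rw [← smul_apply, ← map_smul, ← hxα, hT α x y, hyα, map_smul]
  by_contra hne
  exact hα (smul_left_injective K hne h)

section Composition

variable {R M N A : Type*} [Semiring R] [AddCommMonoid M] [Module R M] [AddCommMonoid N]
  [Module R N]

theorem comp_comp_eq_of_comp_comp_eq {e : N →ₗ[R] M} {e' : M →ₗ[R] N} (he : e' ∘ₗ e = id)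
    (he' : e ∘ₗ e' = id) {L : M →ₗ[R] N} {p : N →ₗ[R] M} (h : e ∘ₗ L ∘ₗ p = p ∘ₗ L ∘ₗ e) :
    L ∘ₗ p ∘ₗ e' = e' ∘ₗ p ∘ₗ L :=
  calc L ∘ₗ p ∘ₗ e' = e' ∘ₗ (e ∘ₗ L ∘ₗ p) ∘ₗ e' := by simp only [← comp_assoc, he, id_comp]
    _ = e' ∘ₗ p ∘ₗ L := by rw [h]; simp only [comp_assoc, he', comp_id]

theorem comp_comp_comm_of_surjective {q : A → N →ₗ[R] M} {g b : M →ₗ[R] N} {α₀ : A}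
    (hg : g ∘ₗ q α₀ = id) (hb : Function.Surjective (b ∘ₗ q α₀))
    (hcomm : ∀ α β, q α ∘ₗ b ∘ₗ q β = q β ∘ₗ b ∘ₗ q α) (α β : A) :
    q α ∘ₗ g ∘ₗ q β = q β ∘ₗ g ∘ₗ q α := by
  have key (α β : A) : (q α ∘ₗ g ∘ₗ q β) ∘ₗ b ∘ₗ q α₀ = q α ∘ₗ b ∘ₗ q β :=
    calc (q α ∘ₗ g ∘ₗ q β) ∘ₗ b ∘ₗ q α₀ = q α ∘ₗ g ∘ₗ (q β ∘ₗ b ∘ₗ q α₀) := by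
          simp only [comp_assoc]
      _ = q α ∘ₗ b ∘ₗ q β := by rw [hcomm β α₀, ← comp_assoc _ (q α₀) g, hg, id_comp]
  rw [← cancel_right hb, key, key, hcomm]

theorem commute_comp_of_comp_comp_comm {q : A → N →ₗ[R] M} {g : M →ₗ[R] N}
    (h : ∀ α β, q α ∘ₗ g ∘ₗ q β = q β ∘ₗ g ∘ₗ q α) : Pairwise (Commute on (q · ∘ₗ g)) :=
  fun α β _ => by
    change (q α ∘ₗ g) ∘ₗ (q β ∘ₗ g) = (q β ∘ₗ g) ∘ₗ (q α ∘ₗ g)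
    simpa only [comp_assoc] using congrArg (· ∘ₗ g) (h α β)

end Composition

section Dual

variable {R V : Type*} [CommSemiring R] [AddCommMonoid V] [Module R V]
  {g : V →ₗ[R] Module.Dual R V} {p : Module.Dual R V →ₗ[R] V}

theorem isSymm_of_comp_eq_id (hp : ∀ f f' : Module.Dual R V, f (p f') = f' (p f))
    (h : p ∘ₗ g = id) : BilinForm.IsSymm g := by
  refine ⟨fun x y => ?_⟩
  have hpg (z : V) : p (g z) = z := LinearMap.congr_fun h z
  calc g x y = g x (p (g y)) := by rw [hpg]
    _ = g y (p (g x)) := hp _ _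
    _ = g y x := by rw [hpg]

theorem apply_self_pos_of_comp_eq_id [PartialOrder R]
    (hp : ∀ f : Module.Dual R V, f ≠ 0 → 0 < f (p f)) (h : p ∘ₗ g = id) (x : V) (hx : x ≠ 0) :
    0 < g x x := by
  have hpg : p (g x) = x := LinearMap.congr_fun h x
  have hgx : g x ≠ 0 := fun h0 => hx (by rw [← hpg, h0, map_zero])
  simpa only [hpg] using hp _ hgx

theorem isSelfAdjoint_comp_of_comp_comp_eq (hg : BilinForm.IsSymm g)
    (hp : ∀ f f' : Module.Dual R V, f (p f') = f' (p f)) {L : V →ₗ[R] Module.Dual R V}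
    (hL : L ∘ₗ p ∘ₗ g = g ∘ₗ p ∘ₗ L) : L.IsSelfAdjoint (p ∘ₗ g) := fun x y =>
  calc L (p (g x)) y = g (p (L x)) y := congr($hL x y)
    _ = g y (p (L x)) := hg.eq _ _
    _ = L x (p (g y)) := hp _ _

theorem dualMap_eq_comp_comp (hgp : g ∘ₗ p = id) {P : Module.End R V}
    (hP : g.IsSelfAdjoint P) : P.dualMap = g ∘ₗ P ∘ₗ p := by
  ext f x
  have hgp' : g (p f) = f := LinearMap.congr_fun hgp f
  calc f (P x) = g (p f) (P x) := by rw [hgp']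
    _ = g (P (p f)) x := (hP _ _).symm

theorem comp_comp_dualMap_eq_smul (hgp : g ∘ₗ p = id) {P : Module.End R V}
    (hP : g.IsSelfAdjoint P) (hPP : P ∘ₗ P = P) {p' : Module.Dual R V →ₗ[R] V} {c : R}
    (h : (p' ∘ₗ g) ∘ₗ P = c • P) : P ∘ₗ p' ∘ₗ P.dualMap = c • (P ∘ₗ p) := by
  rw [dualMap_eq_comp_comp hgp hP]
  calc P ∘ₗ p' ∘ₗ g ∘ₗ P ∘ₗ p = P ∘ₗ ((p' ∘ₗ g) ∘ₗ P) ∘ₗ p := by simp only [comp_assoc]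
    _ = c • (P ∘ₗ p) := by rw [h, smul_comp, comp_smul, ← comp_assoc, hPP]

end Dual

theorem exists_comp_comp_dualMap_eq_smul {K V : Type*} [Field K] [AddCommGroup V] [Module K V]
    {g : V →ₗ[K] Module.Dual K V} {p : Module.Dual K V →ₗ[K] V} (hgp : g ∘ₗ p = id)
    {P : Module.End K V} (hP : g.IsSelfAdjoint P) (hPP : P ∘ₗ P = P) (hP0 : P ≠ 0)
    {p₁ p₂ : Module.Dual K V →ₗ[K] V} {c₁ c₂ : K} (h₁ : (p₁ ∘ₗ g) ∘ₗ P = c₁ • P)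
    (h₂ : (p₂ ∘ₗ g) ∘ₗ P = c₂ • P) (hinj : Function.Injective (p₂ ∘ₗ g)) :
    ∃ c : K, P ∘ₗ p₁ ∘ₗ P.dualMap = c • (P ∘ₗ p₂ ∘ₗ P.dualMap) := by
  have hc₂ : c₂ ≠ 0 := by
    rintro rfl
    refine hP0 (LinearMap.ext fun x => hinj ?_)
    simpa using LinearMap.congr_fun h₂ x
  refine ⟨c₁ / c₂, ?_⟩
  rw [comp_comp_dualMap_eq_smul hgp hP hPP h₁, comp_comp_dualMap_eq_smul hgp hP hPP h₂, smul_smul,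
    div_mul_cancel₀ _ hc₂]

end LinearMap

namespace LinearMap.IsSymmetric

variable {𝕜 E A : Type*} [RCLike 𝕜] [NormedAddCommGroup E] [InnerProductSpace 𝕜 E]
  [FiniteDimensional 𝕜 E]

theorem exists_jointEigenprojections {T : A → Module.End 𝕜 E} (hT : ∀ α, (T α).IsSymmetric)
    (hC : Pairwise (Commute on T)) :
    ∃ (N : ℕ) (P : Fin N → Module.End 𝕜 E) (χ : Fin N → A → 𝕜),
      (∀ γ, P γ ≠ 0) ∧ (∀ γ, P γ ∘ₗ P γ = P γ) ∧ (∑ γ, P γ) = id ∧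
      (∀ γ₁ γ₂, γ₁ ≠ γ₂ → P γ₁ ∘ₗ P γ₂ = 0) ∧
      (∀ B : LinearMap.BilinForm 𝕜 E, (∀ α, B.IsSelfAdjoint (T α)) → ∀ γ, B.IsSelfAdjoint (P γ)) ∧
      ∀ γ α, T α ∘ₗ P γ = χ γ α • P γ := by
  let J : (A → 𝕜) → Submodule 𝕜 E := fun χ => ⨅ α, (T α).eigenspace (χ α)
  have hJ := orthogonalFamily_iInf_eigenspaces hT
  have hfin : {χ | J χ ≠ ⊥}.Finite := Submodule.finite_ne_bot_of_iSupIndep hJ.independent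
  let e := hfin.fintype.equivFin
  let χ : Fin _ → A → 𝕜 := fun γ => e.symm γ
  have hχ : Function.Injective χ := Subtype.val_injective.comp e.symm.injective
  have hK := hJ.comp hχ
  let P γ : Module.End 𝕜 E := (J (χ γ)).starProjection
  have hPE γ x : P γ x ∈ J (χ γ) := Submodule.starProjection_apply_mem _ x
  have hsum : ∑ γ, P γ = id := by
    have htop : ⨆ γ, J (χ γ) = ⊤ := by
      rw [e.symm.iSup_comp (g := fun χ : {χ | J χ ≠ ⊥} => J χ)]
      exact (iSup_ne_bot_subtype J).trans (iSup_iInf_eq_top_of_commute hT hC)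
    ext x
    simpa [P] using hK.sum_projection_of_mem_iSup x (htop ▸ Submodule.mem_top)
  refine ⟨_, P, χ, fun γ hγ => ?_, fun γ => ?_, hsum, fun γ₁ γ₂ h => ?_,
    fun B hB => isSelfAdjoint_of_sum_eq_id B hsum fun i j hij x y =>
      apply_eq_zero_of_mem_iInf_eigenspace B hB (hχ.ne hij) (hPE i x) (hPE j y),
    fun γ α => LinearMap.ext fun x =>
      Module.End.mem_eigenspace_iff.mp (Submodule.mem_iInf _ |>.mp (hPE γ x) α)⟩
  · refine (e.symm γ).2 (Submodule.starProjection_inj.mp ?_)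
    rw [Submodule.starProjection_bot]
    exact ContinuousLinearMap.coe_injective hγ
  · exact congrArg ContinuousLinearMap.toLinearMap (J (χ γ)).isIdempotentElem_starProjection
  · exact congrArg ContinuousLinearMap.toLinearMap (hK.isOrtho h).starProjection_comp_starProjection

end LinearMap.IsSymmetric

namespace LinearMap.BilinForm

variable {V : Type*} [AddCommGroup V] [Module ℝ V]

@[reducible] noncomputable def toInnerProductCore (G : LinearMap.BilinForm ℝ V) (hG : G.IsSymm)
    (hpos : ∀ x, x ≠ 0 → 0 < G x x) : InnerProductSpace.Core ℝ V where
  inner x y := G x y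
  conj_inner_symm x y := hG.eq y x
  re_inner_nonneg x := by
    rcases eq_or_ne x 0 with rfl | hx
    · simp
    · exact (hpos x hx).le
  add_left x y z := by simp
  smul_left x y r := by simp
  definite x h := by
    contrapose! h
    exact (hpos x h).ne'

theorem exists_jointEigenprojections [FiniteDimensional ℝ V] {A : Type*}
    (G : LinearMap.BilinForm ℝ V) (hG : G.IsSymm) (hpos : ∀ x, x ≠ 0 → 0 < G x x)
    {T : A → Module.End ℝ V} (hT : ∀ α, G.IsSelfAdjoint (T α)) (hC : Pairwise (Commute on T)) :
    ∃ (N : ℕ) (P : Fin N → Module.End ℝ V) (χ : Fin N → A → ℝ),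
      (∀ γ, P γ ≠ 0) ∧ (∀ γ, P γ ∘ₗ P γ = P γ) ∧ (∑ γ, P γ) = LinearMap.id ∧
      (∀ γ₁ γ₂, γ₁ ≠ γ₂ → P γ₁ ∘ₗ P γ₂ = 0) ∧
      (∀ B : LinearMap.BilinForm ℝ V, (∀ α, B.IsSelfAdjoint (T α)) →
        ∀ γ, B.IsSelfAdjoint (P γ)) ∧
      ∀ γ α, T α ∘ₗ P γ = χ γ α • P γ := by
  let _ := (G.toInnerProductCore hG hpos).toNormedAddCommGroup
  let _ := InnerProductSpace.ofCore (G.toInnerProductCore hG hpos).toCore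
  exact IsSymmetric.exists_jointEigenprojections hT hC

end LinearMap.BilinForm

theorem stmt4_general {V W : Type*} [AddCommGroup V] [Module ℝ V] [FiniteDimensional ℝ V]
    [AddCommGroup W] [Module ℝ W]
    {A : Type*} [Nonempty A]
    (q : A → (Module.Dual ℝ V →ₗ[ℝ] V))
    (hqsymm : ∀ (α : A) (f g : Module.Dual ℝ V), f (q α g) = g (q α f))
    (hqpos : ∀ (α : A) (f : Module.Dual ℝ V), f ≠ 0 → 0 < f (q α f))
    (qinv : A → (V →ₗ[ℝ] Module.Dual ℝ V))
    (hqinv₁ : ∀ α, qinv α ∘ₗ q α = LinearMap.id)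
    (hqinv₂ : ∀ α, q α ∘ₗ qinv α = LinearMap.id)
    (b : W →ₗ[ℝ] (V →ₗ[ℝ] Module.Dual ℝ V))
    (hb₀ : ∃ ω₀ : W, Function.Bijective (b ω₀))
    (hcomm : ∀ (α β : A) (ω : W), q α ∘ₗ b ω ∘ₗ q β = q β ∘ₗ b ω ∘ₗ q α) :
    ∃ (N : ℕ) (P : Fin N → (V →ₗ[ℝ] V)),
      (∀ γ, P γ ≠ 0) ∧ (∀ γ, P γ ∘ₗ P γ = P γ) ∧
      (∑ γ, P γ) = LinearMap.id ∧
      (∀ γ₁ γ₂ : Fin N, γ₁ ≠ γ₂ → P γ₁ ∘ₗ P γ₂ = 0) ∧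
      (∀ (γ : Fin N) (ω : W) (x y : V), b ω (P γ x) y = b ω x (P γ y)) ∧
      (∀ (γ : Fin N) (α : A) (x y : V), qinv α (P γ x) y = qinv α x (P γ y)) ∧
      (∀ (γ : Fin N) (α β : A), ∃ c : ℝ,
        P γ ∘ₗ q α ∘ₗ (P γ).dualMap = c • (P γ ∘ₗ q β ∘ₗ (P γ).dualMap)) := by
  obtain ⟨ω₀, hω₀⟩ := hb₀
  obtain ⟨α₀⟩ : Nonempty A := inferInstance
  have hq₀ : Function.RightInverse (qinv α₀) (q α₀) := LinearMap.congr_fun (hqinv₂ α₀)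
  have hcross := LinearMap.comp_comp_comm_of_surjective (hqinv₁ α₀)
    (hω₀.2.comp hq₀.surjective) (hcomm · · ω₀)
  have hG := LinearMap.isSymm_of_comp_eq_id (hqsymm α₀) (hqinv₂ α₀)
  have hTadj (L : V →ₗ[ℝ] Module.Dual ℝ V) (hL : ∀ δ, L ∘ₗ q δ ∘ₗ qinv α₀ = qinv α₀ ∘ₗ q δ ∘ₗ L)
      (δ : A) : L.IsSelfAdjoint (q δ ∘ₗ qinv α₀) :=
    LinearMap.isSelfAdjoint_comp_of_comp_comp_eq hG (hqsymm δ) (hL δ)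
  have hb_comm (ω : W) (δ : A) : b ω ∘ₗ q δ ∘ₗ qinv α₀ = qinv α₀ ∘ₗ q δ ∘ₗ b ω :=
    LinearMap.comp_comp_eq_of_comp_comp_eq (hqinv₁ α₀) (hqinv₂ α₀) (hcomm α₀ δ ω)
  have hqinv_comm (α δ : A) : qinv α ∘ₗ q δ ∘ₗ qinv α₀ = qinv α₀ ∘ₗ q δ ∘ₗ qinv α :=
    (LinearMap.comp_comp_eq_of_comp_comp_eq (hqinv₁ α) (hqinv₂ α) (hcross α δ)).symm
  obtain ⟨N, P, χ, hP0, hPP, hsum, horth, hPadj, hPT⟩ :=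
    LinearMap.BilinForm.exists_jointEigenprojections (qinv α₀) hG
      (LinearMap.apply_self_pos_of_comp_eq_id (hqpos α₀) (hqinv₂ α₀)) (hTadj _ (hqinv_comm α₀))
      (LinearMap.commute_comp_of_comp_comp_comm hcross)
  refine ⟨N, P, hP0, hPP, hsum, horth, fun γ ω => hPadj (b ω) (hTadj _ (hb_comm ω)) γ,
    fun γ α => hPadj (qinv α) (hTadj _ (hqinv_comm α)) γ, fun γ α β => ?_⟩
  have hqβ : Function.LeftInverse (qinv β) (q β) := LinearMap.congr_fun (hqinv₁ β)
  exact LinearMap.exists_comp_comp_dualMap_eq_smul (hqinv₁ α₀)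
    (hPadj _ (hTadj _ (hqinv_comm α₀)) γ) (hPP γ) (hP0 γ) (hPT γ α) (hPT γ β)
    (hqβ.injective.comp hq₀.injective)

/-- Coordinate-free version of the decomposition for commuting
sub-Laplacians on an MW⁺ group: given symmetric positive definite `q α : V* → V` (with
two-sided inverses `qinv α`), skew `b ω : V → V*` depending linearly on `ω ∈ W`, some
`b ω₀` bijective, and `q α ∘ b ω ∘ q β = q β ∘ b ω ∘ q α`, there is a finite family of
nonzero pairwise-orthogonal projections summing to the identity, self-adjoint for each
`b ω` and each `qinv α`, such that on each range the maps `P γ ∘ q α ∘ (P γ)*` are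
pairwise proportional. -/
theorem stmt4 {V W : Type*} [AddCommGroup V] [Module ℝ V] [FiniteDimensional ℝ V]
    [AddCommGroup W] [Module ℝ W]
    {A : Type*} [Fintype A] [Nonempty A]
    (q : A → (Module.Dual ℝ V →ₗ[ℝ] V))
    (hqsymm : ∀ (α : A) (f g : Module.Dual ℝ V), f (q α g) = g (q α f))
    (hqpos : ∀ (α : A) (f : Module.Dual ℝ V), f ≠ 0 → 0 < f (q α f))
    (qinv : A → (V →ₗ[ℝ] Module.Dual ℝ V))
    (hqinv₁ : ∀ α, qinv α ∘ₗ q α = LinearMap.id)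
    (hqinv₂ : ∀ α, q α ∘ₗ qinv α = LinearMap.id)
    (b : W →ₗ[ℝ] (V →ₗ[ℝ] Module.Dual ℝ V))
    (hbskew : ∀ (ω : W) (x y : V), b ω x y = -(b ω y x))
    (hb₀ : ∃ ω₀ : W, Function.Bijective (b ω₀))
    (hcomm : ∀ (α β : A) (ω : W), q α ∘ₗ b ω ∘ₗ q β = q β ∘ₗ b ω ∘ₗ q α) :
    ∃ (N : ℕ) (P : Fin N → (V →ₗ[ℝ] V)),
      (∀ γ, P γ ≠ 0) ∧ (∀ γ, P γ ∘ₗ P γ = P γ) ∧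
      (∑ γ, P γ) = LinearMap.id ∧
      (∀ γ₁ γ₂ : Fin N, γ₁ ≠ γ₂ → P γ₁ ∘ₗ P γ₂ = 0) ∧
      (∀ (γ : Fin N) (ω : W) (x y : V), b ω (P γ x) y = b ω x (P γ y)) ∧
      (∀ (γ : Fin N) (α : A) (x y : V), qinv α (P γ x) y = qinv α x (P γ y)) ∧
      (∀ (γ : Fin N) (α β : A), ∃ c : ℝ,
        P γ ∘ₗ q α ∘ₗ (P γ).dualMap = c • (P γ ∘ₗ q β ∘ₗ (P γ).dualMap)) :=
  stmt4_general q hqsymm hqpos qinv hqinv₁ hqinv₂ b hb₀ hcomm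
end

section
/- Let E₁ and E₂ be finite-dimensional real vector spaces, C a convex subset of E₁ with nonempty interior, and L : E₁ → E₂ a linear map which is proper on the boundary ∂C of C (the intersection with ∂C of the preimage of every compact set is compact). Assume that for every x ∈ ∂C, either L⁻¹(L(x)) ∩ ∂C = {x}, or there exist an open neighbourhood U of x in E₁ and a real-analytic function φ : U → ℝ whose derivative is nonvanishing on U such that ∂C ∩ U = φ⁻¹(0). Then the map ∂C → L(∂C) induced by L is an open map (both sets carrying the subspace topology). -/
/-!
Openness of `∂C → L(∂C)` is local: it suffices that, for every `x ∈ ∂C`, each point of `L(∂C)`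
near `L x` is the image of a point of `∂C` near `x`.

* If the fibre of `∂C` through `x` is `{x}`, this follows from properness of `L` on `∂C`.
* If `∂C` is the zero set of `φ` near `x` and `dφ(x)` does not vanish on `ker L`, then `(L, φ)`
  is a submersion at `x`, so the zero set of `φ` near `x` is mapped by `L` onto a neighbourhood
  of `L x` in the range of `L`.
* If `dφ(x)` vanishes on `ker L`, then, since `φ` has constant sign on `interior C` near `x`,
  the hyperplane `dφ(x) = dφ(x) x` supports `C` at `x`. The fibre of `∂C` through `x` then
  coincides with the fibre of `closure C`, hence is convex and compact. If it contained a second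
  point, the last point of the fibre on the ray through both would be a point of `∂C` at which
  neither alternative of the hypothesis holds: the fibre is not a singleton, and by the identity
  theorem an analytic defining function vanishing on the segment would vanish a little beyond
  it. So the fibre is `{x}` and the first case applies.
-/

open Set Filter Topology

section Topology

variable {X Y : Type*} [TopologicalSpace X] [TopologicalSpace Y]

theorem isOpenMap_imageFactorization_of_nhdsWithin_le {f : X → Y} {s : Set X}
    (h : ∀ x ∈ s, 𝓝[f '' s] (f x) ≤ map f (𝓝[s] x)) :
    IsOpenMap (s.imageFactorization f) := by
  refine isOpenMap_iff_nhds_le.2 fun ⟨x, hx⟩ V hV => ?_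
  obtain ⟨W, hW, hWV⟩ := (mem_nhds_subtype s ⟨x, hx⟩ _).1 hV
  obtain ⟨u, hu, hus⟩ := mem_nhdsWithin_iff_exists_mem_nhds_inter.1 <|
    h x hx <| mem_map.2 <| mem_of_superset (inter_mem_nhdsWithin s hW) (subset_preimage_image f _)
  refine (mem_nhds_subtype _ _ _).2 ⟨u, hu, ?_⟩
  rintro ⟨_, hy⟩ hyu
  obtain ⟨w, ⟨hws, hwW⟩, hfw⟩ := hus ⟨hyu, hy⟩
  have : s.imageFactorization f ⟨w, hws⟩ ∈ V := hWV hwW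
  simpa only [imageFactorization, hfw] using this

theorem nhdsWithin_image_le_map_of_preimage_inter_eq_singleton [T2Space Y]
    [WeaklyLocallyCompactSpace Y] {f : X → Y} (hf : Continuous f) {s : Set X}
    (hproper : ∀ K, IsCompact K → IsCompact (f ⁻¹' K ∩ s)) {x : X}
    (hx : f ⁻¹' {f x} ∩ s = {x}) :
    𝓝[f '' s] (f x) ≤ map f (𝓝[s] x) := by
  intro V hV
  obtain ⟨W, hWo, hxW, hWV⟩ := mem_nhdsWithin.1 hV
  obtain ⟨K, hK, hKx⟩ := exists_compact_mem_nhds (f x)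
  set A := (f ⁻¹' K ∩ s) \ W
  have hfx : f x ∉ f '' A := by
    rintro ⟨z, ⟨⟨-, hzs⟩, hzW⟩, hfz⟩
    exact hzW (hx.subset ⟨hfz, hzs⟩ ▸ hxW)
  have hnhds : K ∩ (f '' A)ᶜ ∈ 𝓝 (f x) :=
    inter_mem hKx ((((hproper K hK).diff hWo).image hf).isClosed.isOpen_compl.mem_nhds hfx)
  refine mem_nhdsWithin_iff_exists_mem_nhds_inter.2 ⟨_, hnhds, ?_⟩
  rintro _ ⟨⟨hzK, hzA⟩, z, hzs, rfl⟩
  by_contra hzV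
  exact hzA ⟨z, ⟨⟨hzK, hzs⟩, fun hzW => hzV (hWV ⟨hzW, hzs⟩)⟩, rfl⟩

theorem IsPreconnected.forall_lt_or_forall_gt {α : Type*} [LinearOrder α] [TopologicalSpace α]
    [OrderClosedTopology α] {s : Set X} (hs : IsPreconnected s) {f : X → α}
    (hf : ContinuousOn f s) {c : α} (hc : ∀ x ∈ s, f x ≠ c) :
    (∀ x ∈ s, f x < c) ∨ ∀ x ∈ s, c < f x := by
  by_contra! h
  obtain ⟨⟨a, ha, hac⟩, ⟨b, hb, hbc⟩⟩ := h
  obtain ⟨y, hy, hyc⟩ := hs.intermediate_value hb ha hf ⟨hbc, hac⟩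
  exact hc y hy hyc

end Topology

theorem nhds_le_map_nhdsWithin_levelSet {𝕜 E F : Type*} [NontriviallyNormedField 𝕜]
    [CompleteSpace 𝕜] [NormedAddCommGroup E] [NormedSpace 𝕜 E] [CompleteSpace E]
    [NormedAddCommGroup F] [NormedSpace 𝕜 F] [CompleteSpace F] {L : E →L[𝕜] F}
    (hL : L.range = ⊤) {φ : E → 𝕜} {ℓ : StrongDual 𝕜 E} {x : E} (hφ : HasStrictFDerivAt φ ℓ x)
    {v : E} (hv : L v = 0) (hℓv : ℓ v ≠ 0) :
    𝓝 (L x) ≤ map L (𝓝[φ ⁻¹' {φ x}] x) := by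
  have hsurj : (L.prod ℓ).range = ⊤ := by
    refine LinearMap.range_eq_top.2 fun ⟨y, t⟩ => ?_
    obtain ⟨u, rfl⟩ := LinearMap.range_eq_top.1 hL y
    exact ⟨u + ((t - ℓ u) / ℓ v) • v, by simp [hv, hℓv]⟩
  have hψ := (L.hasStrictFDerivAt.prodMk hφ).map_nhds_eq_of_surj hsurj
  intro V hV
  obtain ⟨W, hW, hWV⟩ := mem_nhdsWithin_iff_exists_mem_nhds_inter.1 (mem_map.1 hV)
  have hψW : (fun y => (L y, φ y)) '' W ∈ 𝓝 (L x, φ x) := hψ ▸ image_mem_map hW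
  refine mem_of_superset ((Continuous.prodMk_left (φ x)).continuousAt.preimage_mem_nhds hψW) ?_
  rintro _ ⟨w, hwW, hw⟩
  simp only [Prod.mk.injEq] at hw
  exact hw.1 ▸ hWV ⟨hwW, hw.2⟩

theorem nhdsWithin_range_le_map_nhdsWithin_levelSet {E F : Type*} [NormedAddCommGroup E]
    [NormedSpace ℝ E] [FiniteDimensional ℝ E] [NormedAddCommGroup F] [NormedSpace ℝ F]
    (L : E →ₗ[ℝ] F) {φ : E → ℝ} {ℓ : StrongDual ℝ E} {x : E} (hφ : HasStrictFDerivAt φ ℓ x)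
    {v : E} (hv : L v = 0) (hℓv : ℓ v ≠ 0) :
    𝓝[range L] (L x) ≤ map L (𝓝[φ ⁻¹' {φ x}] x) := by
  let Lr : E →L[ℝ] LinearMap.range L := L.rangeRestrict.toContinuousLinearMap
  calc 𝓝[range L] (L x) = map Subtype.val (𝓝 (Lr x)) := by
        rw [map_nhds_subtype_val, ← LinearMap.coe_range]; rfl
    _ ≤ map Subtype.val (map Lr (𝓝[φ ⁻¹' {φ x}] x)) :=
        map_mono (nhds_le_map_nhdsWithin_levelSet L.range_rangeRestrict hφ (Subtype.ext hv) hℓv)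
    _ = map L (𝓝[φ ⁻¹' {φ x}] x) := map_map

section Convex

variable {E : Type*} [NormedAddCommGroup E] [NormedSpace ℝ E]

theorem Convex.le_of_hasFDerivAt_of_eventually_le {C : Set E} (hC : Convex ℝ C)
    (hCint : (interior C).Nonempty) {φ : E → ℝ} {ℓ : StrongDual ℝ E} {x₀ : E}
    (hx₀ : x₀ ∈ closure C) (hφ : HasFDerivAt φ ℓ x₀)
    (hmax : ∀ᶠ z in 𝓝 x₀, z ∈ interior C → φ z ≤ φ x₀) :
    ∀ z ∈ C, ℓ z ≤ ℓ x₀ := by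
  have hloc : IsLocalMaxOn φ (interior C) x₀ := eventually_nhdsWithin_iff.2 hmax
  have hint : interior C ⊆ {z | ℓ z ≤ ℓ x₀} := fun z hz => by
    have := hloc.hasFDerivWithinAt_nonpos hφ.hasFDerivWithinAt
      (sub_mem_posTangentConeAt_of_openSegment_subset
        (hC.openSegment_closure_interior_subset_interior hx₀ hz))
    simpa using this
  intro z hz
  have hcl := closure_minimal hint (isClosed_le ℓ.continuous continuous_const)
  rw [hC.closure_interior_eq_closure_of_nonempty_interior hCint] at hcl
  exact hcl (subset_closure hz)

theorem Convex.exists_le_of_frontier_inter_eq {C : Set E} (hC : Convex ℝ C)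
    (hCint : (interior C).Nonempty) {x₀ : E} (hx₀ : x₀ ∈ frontier C) {U : Set E}
    (hU : U ∈ 𝓝 x₀) {φ : E → ℝ} (hφU : ContinuousOn φ U) {ℓ : StrongDual ℝ E}
    (hφ : HasFDerivAt φ ℓ x₀) (hCU : frontier C ∩ U = {y ∈ U | φ y = 0}) :
    ∃ ℓ' ∈ ({ℓ, -ℓ} : Set (StrongDual ℝ E)), ∀ z ∈ C, ℓ' z ≤ ℓ' x₀ := by
  obtain ⟨r, hr, hrU⟩ := Metric.mem_nhds_iff.1 hU
  have hφx₀ : φ x₀ = 0 := (hCU.subset ⟨hx₀, mem_of_mem_nhds hU⟩).2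
  have hφS : ∀ z ∈ interior C ∩ Metric.ball x₀ r, φ z ≠ 0 := fun z hz h0 =>
    (hCU.superset ⟨hrU hz.2, h0⟩).1.2 hz.1
  have hball : ∀ᶠ z in 𝓝 x₀, z ∈ Metric.ball x₀ r := Metric.ball_mem_nhds x₀ hr
  rcases (hC.interior.inter (convex_ball x₀ r)).isPreconnected.forall_lt_or_forall_gt
    (hφU.mono fun z hz => hrU hz.2) hφS with hneg | hpos
  · refine ⟨ℓ, .inl rfl, hC.le_of_hasFDerivAt_of_eventually_le hCint hx₀.1 hφ ?_⟩
    filter_upwards [hball] with z hz hzC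
    exact hφx₀ ▸ (hneg z ⟨hzC, hz⟩).le
  · refine ⟨-ℓ, .inr rfl, hC.le_of_hasFDerivAt_of_eventually_le hCint hx₀.1 hφ.neg ?_⟩
    filter_upwards [hball] with z hz hzC
    simpa [hφx₀] using (hpos z ⟨hzC, hz⟩).le

theorem inter_frontier_eq_inter_closure_of_le {C A : Set E} {ℓ : StrongDual ℝ E} (hℓ : ℓ ≠ 0)
    {c : ℝ} (hC : ∀ z ∈ C, ℓ z ≤ c) (hA : ∀ z ∈ A, ℓ z = c) :
    A ∩ frontier C = A ∩ closure C := by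
  have hint : ℓ '' interior C ⊆ Iio c := by
    rw [← interior_Iic]
    exact interior_maximal (image_subset_iff.2 fun z hz => hC z (interior_subset hz))
      (ℓ.isOpenMap_of_ne_zero hℓ _ isOpen_interior)
  rw [← closure_sdiff_interior]
  refine subset_antisymm (inter_subset_inter_right _ sdiff_subset)
    fun z ⟨hzA, hzC⟩ => ⟨hzA, hzC, fun hz => ?_⟩
  exact (hint (mem_image_of_mem ℓ hz)).ne (hA z hzA)

theorem convex_preimage_inter_frontier {F : Type*} [AddCommGroup F] [Module ℝ F]
    {C : Set E} (hC : Convex ℝ C) (hCint : (interior C).Nonempty) {x₀ : E}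
    (hx₀ : x₀ ∈ frontier C) {U : Set E} (hU : U ∈ 𝓝 x₀) {φ : E → ℝ} (hφU : ContinuousOn φ U)
    {ℓ : StrongDual ℝ E} (hφ : HasFDerivAt φ ℓ x₀) (hℓ : ℓ ≠ 0)
    (hCU : frontier C ∩ U = {y ∈ U | φ y = 0}) {L : E →ₗ[ℝ] F}
    (hker : ∀ v, L v = 0 → ℓ v = 0) :
    Convex ℝ (L ⁻¹' {L x₀} ∩ frontier C) := by
  obtain ⟨ℓ', hℓ', hsupp⟩ := hC.exists_le_of_frontier_inter_eq hCint hx₀ hU hφU hφ hCU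
  have hℓ'0 : ℓ' ≠ 0 := by rcases hℓ' with rfl | rfl <;> simpa
  have hfib : ∀ z ∈ L ⁻¹' {L x₀}, ℓ' z = ℓ' x₀ := fun z hz => by
    have h := hker (z - x₀) (by simp [show L z = L x₀ from hz])
    rcases hℓ' with rfl | rfl <;> simpa [sub_eq_zero] using h
  rw [inter_frontier_eq_inter_closure_of_le hℓ'0 hsupp hfib]
  exact ((convex_singleton _).linear_preimage L).inter hC.closure

end Convex

theorem AnalyticAt.eventually_mem_of_frequently_mem {𝕜 E : Type*} [NontriviallyNormedField 𝕜]
    [NormedAddCommGroup E] [NormedSpace 𝕜 E] {γ : 𝕜 → E} {b : 𝕜} (hγ : AnalyticAt 𝕜 γ b)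
    {φ : E → 𝕜} (hφ : AnalyticAt 𝕜 φ (γ b)) {s U : Set E} (hU : U ∈ 𝓝 (γ b))
    (hsU : s ∩ U = {y ∈ U | φ y = 0}) (h : ∃ᶠ t in 𝓝[≠] b, γ t ∈ s) :
    ∀ᶠ t in 𝓝 b, γ t ∈ s := by
  have hγU : ∀ᶠ t in 𝓝 b, γ t ∈ U := hγ.continuousAt hU
  have hzero : ∀ᶠ t in 𝓝 b, φ (γ t) = 0 := by
    refine (hφ.comp hγ).frequently_zero_iff_eventually_zero.1 ?_
    refine h.mp ((hγU.filter_mono nhdsWithin_le_nhds).mono fun t htU hts => ?_)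
    exact (hsU.subset ⟨hts, htU⟩).2
  filter_upwards [hγU, hzero] with t htU ht0 using (hsU.superset ⟨htU, ht0⟩).1

theorem preimage_inter_eq_singleton_of_convex {E F : Type*} [NormedAddCommGroup E]
    [NormedSpace ℝ E] [AddCommGroup F] [Module ℝ F] {s : Set E} {L : E →ₗ[ℝ] F} {x₀ : E}
    (hx₀ : x₀ ∈ s) (hcpt : IsCompact (L ⁻¹' {L x₀} ∩ s)) (hconv : Convex ℝ (L ⁻¹' {L x₀} ∩ s))
    (hreg : ∀ x ∈ L ⁻¹' {L x₀} ∩ s, L ⁻¹' {L x} ∩ s = {x} ∨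
      ∃ U ∈ 𝓝 x, ∃ φ : E → ℝ, AnalyticAt ℝ φ x ∧ s ∩ U = {y ∈ U | φ y = 0}) :
    L ⁻¹' {L x₀} ∩ s = {x₀} := by
  refine eq_singleton_iff_unique_mem.2 ⟨⟨rfl, hx₀⟩, fun z hz => ?_⟩
  by_contra hne
  set v := z - x₀
  have hv : v ≠ 0 := sub_ne_zero.2 hne
  have hLv : L v = 0 := by simp [v, show L z = L x₀ from hz.1]
  set T := {t : ℝ | x₀ + t • v ∈ L ⁻¹' {L x₀} ∩ s}
  have hTs : ∀ t, t ∈ T ↔ x₀ + t • v ∈ s := fun t => by simp [T, hLv]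
  have hT : IsCompact T :=
    (isClosedEmbedding_smul_left hv).isCompact_preimage
      ((Homeomorph.addLeft x₀).isCompact_preimage.2 hcpt)
  have hTconv : Convex ℝ T :=
    (hconv.translate_preimage_right x₀).linear_preimage (LinearMap.toSpanSingleton ℝ E v)
  have h0T : (0 : ℝ) ∈ T := by simp [T, hx₀]
  set b := sSup T
  have hbT : b ∈ T := hT.sSup_mem ⟨0, h0T⟩
  have hb1 : 1 ≤ b := le_csSup hT.bddAbove ((hTs 1).2 (by simpa [v] using hz.2))
  rcases hreg _ hbT with hsing | ⟨U, hU, φ, hφ, hsU⟩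
  · have : x₀ = x₀ + b • v := hsing.subset ⟨hbT.1.symm, hx₀⟩
    have hb0 : b = 0 := by simpa [hv] using this
    linarith
  · have hleft : ∀ᶠ t in 𝓝[<] b, t ∈ T := mem_of_superset (Ioo_mem_nhdsLT (by linarith))
      fun t ht => hTconv.ordConnected.out h0T hbT (Ioo_subset_Icc_self ht)
    have hnear : ∀ᶠ t in 𝓝 b, x₀ + t • v ∈ s :=
      (analyticAt_const.add (analyticAt_id.smul analyticAt_const)).eventually_mem_of_frequently_mem
        hφ hU hsU ((hleft.mono fun t ht => (hTs t).1 ht).frequently.filter_mono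
          (nhdsLT_le_nhdsNE b))
    obtain ⟨t, hbt, ht⟩ := ((frequently_gt_nhds b).and_eventually hnear).exists
    exact hbt.not_ge (le_csSup hT.bddAbove ((hTs t).2 ht))

/-- Let `C` be a convex subset with nonempty interior of a
finite-dimensional real vector space `E₁`, and `L : E₁ → E₂` a linear map which is proper
on the frontier of `C`. If for every `x ∈ ∂C` either the fibre of `L` through `x` meets
`∂C` only at `x`, or `∂C` is near `x` the zero set of a real-analytic function with
nonvanishing derivative, then the map `∂C → L(∂C)` induced by `L` is open. -/
theorem stmt8 {E₁ E₂ : Type*}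
    [NormedAddCommGroup E₁] [NormedSpace ℝ E₁] [FiniteDimensional ℝ E₁]
    [NormedAddCommGroup E₂] [NormedSpace ℝ E₂] [FiniteDimensional ℝ E₂]
    (C : Set E₁) (hC : Convex ℝ C) (hCint : (interior C).Nonempty)
    (L : E₁ →ₗ[ℝ] E₂)
    (hproper : ∀ K : Set E₂, IsCompact K → IsCompact (L ⁻¹' K ∩ frontier C))
    (hreg : ∀ x ∈ frontier C, (L ⁻¹' {L x} ∩ frontier C = {x}) ∨
      ∃ U : Set E₁, IsOpen U ∧ x ∈ U ∧ ∃ φ : E₁ → ℝ, AnalyticOnNhd ℝ φ U ∧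
        (∀ y ∈ U, fderiv ℝ φ y ≠ 0) ∧ frontier C ∩ U = {y ∈ U | φ y = 0}) :
    IsOpenMap (fun x : frontier C =>
      (⟨L x, Set.mem_image_of_mem L x.2⟩ : L '' frontier C)) := by
  refine isOpenMap_imageFactorization_of_nhdsWithin_le fun x hx => ?_
  have hfiber : L ⁻¹' {L x} ∩ frontier C = {x} →
      𝓝[L '' frontier C] (L x) ≤ map L (𝓝[frontier C] x) :=
    nhdsWithin_image_le_map_of_preimage_inter_eq_singleton L.continuous_of_finiteDimensional
      hproper
  rcases hreg x hx with hsing | ⟨U, hU, hxU, φ, hφ, hφ', hCU⟩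
  · exact hfiber hsing
  have hφx : HasStrictFDerivAt φ (fderiv ℝ φ x) x := (hφ x hxU).hasStrictFDerivAt
  by_cases hker : ∀ v, L v = 0 → fderiv ℝ φ x v = 0
  · refine hfiber <| preimage_inter_eq_singleton_of_convex hx (hproper _ isCompact_singleton)
      (convex_preimage_inter_frontier hC hCint hx (hU.mem_nhds hxU) hφ.continuousOn
        hφx.hasFDerivAt (hφ' x hxU) hCU hker) fun y hy => (hreg y hy.2).imp_right ?_
    rintro ⟨V, hV, hyV, ψ, hψ, -, hCV⟩
    exact ⟨V, hV.mem_nhds hyV, ψ, hψ y hyV, hCV⟩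
  push Not at hker
  obtain ⟨v, hv, hℓv⟩ := hker
  have hlevel : 𝓝[frontier C] x = 𝓝[φ ⁻¹' {φ x}] x := by
    refine nhdsWithin_eq_nhdsWithin' (hU.mem_nhds hxU) ?_
    rw [hCU, (hCU.subset ⟨hx, hxU⟩).2]
    ext; simp [and_comm]
  calc 𝓝[L '' frontier C] (L x) ≤ 𝓝[range L] (L x) := nhdsWithin_mono _ (image_subset_range _ _)
    _ ≤ map L (𝓝[frontier C] x) :=
      hlevel ▸ nhdsWithin_range_le_map_nhdsWithin_levelSet L hφx hv hℓv
end

section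
/- Let V be a real topological vector space, C a convex subset of V with nonempty interior, and W an affine subspace of V such that W meets the interior of C. Then W ∩ ∂C equals the frontier of W ∩ C in W (with the subspace topology on W), where ∂C is the frontier of C in V. In particular, W ∩ int(C) is the interior of W ∩ C in W and W ∩ closure(C) is the closure of W ∩ C in W. -/
/-!
Fix `x₀ ∈ W ∩ int C`. Every `x ∈ W` is joined to `x₀` by a line inside `W`, and convexity
controls `C` along it: the open segment from an interior point to a point of `closure C` lies in
`int C`. So if `x ∈ W ∩ closure C`, the points of `(x₀, x)` lie in `W ∩ C` and tend to `x`, while if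
`W ∩ C` is a neighbourhood of `x` in `W`, it contains a point `z` beyond `x` on the line, and
`x ∈ (x₀, z) ⊆ int C`. The frontier statement follows from the interior and closure statements.
-/

open Topology Filter Set AffineMap

section

variable {V : Type*} [AddCommGroup V] [Module ℝ V] [TopologicalSpace V]
  [IsTopologicalAddGroup V] [ContinuousSMul ℝ V] {W : AffineSubspace ℝ V}

theorem AffineSubspace.tendsto_lineMap_subtype {p q : V} (hp : p ∈ W) (hq : q ∈ W) :
    Tendsto (fun t : ℝ ↦ (⟨lineMap p q t, lineMap_mem t hp hq⟩ : W)) (𝓝 1) (𝓝 ⟨q, hq⟩) :=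
  tendsto_subtype_rng.2 <| lineMap_continuous.tendsto' _ _ (lineMap_apply_one p q)

variable {C : Set V} {x₀ : V}

theorem Convex.mem_interior_of_mem_interior_preimage_subtype (hC : Convex ℝ C) (hx₀W : x₀ ∈ W)
    (hx₀ : x₀ ∈ interior C) {x : W} (hx : x ∈ interior ((Subtype.val : W → V) ⁻¹' C)) :
    (x : V) ∈ interior C := by
  obtain ⟨t, ht1, htC⟩ := (AffineSubspace.tendsto_lineMap_subtype hx₀W x.2).eventually_mem
    (mem_interior_iff_mem_nhds.1 hx) |>.exists_gt
  apply hC.openSegment_interior_closure_subset_interior hx₀ (subset_closure htC)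
  -- `(x₀, lineMap x₀ x t)` is the image of `(0, t)` under `lineMap x₀ x`, which sends `1` to `x`
  nth_rw 1 [← lineMap_apply_zero (k := ℝ) x₀ (x : V), ← image_openSegment]
  exact ⟨1, Ioo_subset_openSegment ⟨zero_lt_one, ht1⟩, lineMap_apply_one _ _⟩

theorem Convex.mem_closure_preimage_subtype_of_mem_closure (hC : Convex ℝ C) (hx₀W : x₀ ∈ W)
    (hx₀ : x₀ ∈ interior C) {x : W} (hx : (x : V) ∈ closure C) :
    x ∈ closure ((Subtype.val : W → V) ⁻¹' C) := by
  have hline := (AffineSubspace.tendsto_lineMap_subtype hx₀W x.2).mono_left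
    (nhdsWithin_le_nhds (s := Iio 1))
  refine mem_closure_of_tendsto hline ?_
  filter_upwards [Ioo_mem_nhdsLT (zero_lt_one' ℝ)] with t ht
  exact interior_subset (s := C) <|
    hC.openSegment_interior_closure_subset_interior hx₀ hx (lineMap_mem_openSegment ℝ _ _ ht)

theorem Convex.inter_interior_eq_image_interior_preimage_subtype (hC : Convex ℝ C)
    (hx₀W : x₀ ∈ W) (hx₀ : x₀ ∈ interior C) :
    (W : Set V) ∩ interior C = Subtype.val '' interior ((Subtype.val : W → V) ⁻¹' C) := by
  refine Subset.antisymm ?_ ?_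
  · rintro x ⟨hxW, hx⟩
    exact ⟨⟨x, hxW⟩, preimage_interior_subset_interior_preimage continuous_subtype_val hx, rfl⟩
  · rintro _ ⟨x, hx, rfl⟩
    exact ⟨x.2, hC.mem_interior_of_mem_interior_preimage_subtype hx₀W hx₀ hx⟩

theorem Convex.inter_closure_eq_image_closure_preimage_subtype (hC : Convex ℝ C)
    (hx₀W : x₀ ∈ W) (hx₀ : x₀ ∈ interior C) :
    (W : Set V) ∩ closure C = Subtype.val '' closure ((Subtype.val : W → V) ⁻¹' C) := by
  refine Subset.antisymm ?_ ?_
  · rintro x ⟨hxW, hx⟩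
    exact ⟨⟨x, hxW⟩, hC.mem_closure_preimage_subtype_of_mem_closure hx₀W hx₀ hx, rfl⟩
  · rintro _ ⟨x, hx, rfl⟩
    exact ⟨x.2, continuous_subtype_val.closure_preimage_subset C hx⟩

end

theorem stmt9_general {V : Type*} [AddCommGroup V] [Module ℝ V] [TopologicalSpace V]
    [IsTopologicalAddGroup V] [ContinuousSMul ℝ V]
    (C : Set V) (hC : Convex ℝ C)
    (W : AffineSubspace ℝ V) (hW : ((W : Set V) ∩ interior C).Nonempty) :
    (W : Set V) ∩ frontier C =
      Subtype.val '' frontier ((Subtype.val : W → V) ⁻¹' C) ∧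
    (W : Set V) ∩ interior C =
      Subtype.val '' interior ((Subtype.val : W → V) ⁻¹' C) ∧
    (W : Set V) ∩ closure C =
      Subtype.val '' closure ((Subtype.val : W → V) ⁻¹' C) := by
  obtain ⟨x₀, hx₀W, hx₀⟩ := hW
  have hint := hC.inter_interior_eq_image_interior_preimage_subtype hx₀W hx₀
  have hcl := hC.inter_closure_eq_image_closure_preimage_subtype hx₀W hx₀
  refine ⟨?_, hint, hcl⟩
  rw [frontier, frontier, image_sdiff Subtype.val_injective, ← hint, ← hcl,
    inter_sdiff_distrib_left]

/-- If `C` is a convex subset with nonempty interior of a real topological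
vector space `V` and `W` is an affine subspace meeting the interior of `C`, then
`W ∩ ∂C` is the frontier of `W ∩ C` in `W`; moreover `W ∩ int C` is the interior of
`W ∩ C` in `W` and `W ∩ closure C` is the closure of `W ∩ C` in `W`. -/
theorem stmt9 {V : Type*} [AddCommGroup V] [Module ℝ V] [TopologicalSpace V]
    [IsTopologicalAddGroup V] [ContinuousSMul ℝ V]
    (C : Set V) (hC : Convex ℝ C) (hCint : (interior C).Nonempty)
    (W : AffineSubspace ℝ V) (hW : ((W : Set V) ∩ interior C).Nonempty) :
    (W : Set V) ∩ frontier C =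
      Subtype.val '' frontier ((Subtype.val : W → V) ⁻¹' C) ∧
    (W : Set V) ∩ interior C =
      Subtype.val '' interior ((Subtype.val : W → V) ⁻¹' C) ∧
    (W : Set V) ∩ closure C =
      Subtype.val '' closure ((Subtype.val : W → V) ⁻¹' C) :=
  stmt9_general C hC W hW
end
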